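/- Let Ω be a finite set with at least two elements, let G be a solvable subgroup of Sym(Ω) acting primitively on Ω, and suppose |Ω| = p^k with p prime and k ≥ 1. Then there exists a bijection e : Ω ≃ (ZMod p)^k such that every g ∈ G acts affinely through e: for each g ∈ G there exist an invertible linear map L_g : (ZMod p)^k → (ZMod p)^k and a vector b_g ∈ (ZMod p)^k with e(g(x)) = L_g(e(x)) + b_g for all x ∈ Ω. -/

import Mathlib

/-!
A nontrivial solvable group has a nontrivial abelian normal subgroup `A` (the last nontrivial
term of its derived series). In a primitive permutation group every nontrivial normal subgroup
is transitive, and a transitive abelian permutation group is regular, so `|A| = p ^ k`. The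
elements of `A` of order dividing `p` form a normal subgroup `P`, nontrivial by Cauchy's theorem
and hence again regular, which is a vector space over `ZMod p` of dimension `k`. Identifying `Ω` with `P` through the
orbit map `a ↦ a • x₀`, an element `g` acts as `a ↦ g a g⁻¹ + b_g` with `b_g • x₀ = g • x₀`,
and conjugation by `g` is linear on `P`.
-/

/-- A group action is preprimitive if it is pretransitive and every block is trivial.
This matches Mathlib's `MulAction.IsPreprimitive`. -/
def IsPreprimitiveAction (G X : Type*) [Group G] [MulAction G X] : Prop :=
  MulAction.IsPretransitive G X ∧
    ∀ B : Set X, MulAction.IsBlock G B → MulAction.IsTrivialBlock B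

open MulAction
open scoped IsMulCommutative

theorem IsPreprimitiveAction.isPreprimitive {G X : Type*} [Group G] [MulAction G X]
    (h : IsPreprimitiveAction G X) : IsPreprimitive G X :=
  have := h.1
  ⟨fun hB => h.2 _ hB⟩

theorem IsSolvable.exists_normal_isMulCommutative_ne_bot (G : Type*) [Group G]
    [Group.IsSolvable G] [Nontrivial G] :
    ∃ A : Subgroup G, A.Normal ∧ IsMulCommutative A ∧ A ≠ ⊥ := by
  classical
  have hsolv : ∃ n, derivedSeries G n = ⊥ := Group.IsSolvable.solvable
  have hpos : Nat.find hsolv ≠ 0 := fun h =>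
    top_ne_bot (derivedSeries_zero G ▸ h ▸ Nat.find_spec hsolv)
  refine ⟨derivedSeries G (Nat.find hsolv - 1), derivedSeries_normal _ _, ?_,
    Nat.find_min hsolv (by omega)⟩
  rw [← Subgroup.le_centralizer_iff_isMulCommutative,
    ← Subgroup.commutator_eq_bot_iff_le_centralizer, ← derivedSeries_succ,
    Nat.sub_add_cancel (Nat.pos_of_ne_zero hpos)]
  exact Nat.find_spec hsolv

namespace Subgroup

variable {G : Type*} [Group G]

def nTorsion (A : Subgroup G) [IsMulCommutative A] (n : ℕ) : Subgroup G where
  carrier := {g | g ∈ A ∧ g ^ n = 1}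
  one_mem' := ⟨A.one_mem, one_pow n⟩
  mul_mem' {a b} ha hb := ⟨A.mul_mem ha.1 hb.1, by
    rw [Commute.mul_pow (setLike_mul_comm ha.1 hb.1), ha.2, hb.2, one_mul]⟩
  inv_mem' ha := ⟨A.inv_mem ha.1, by rw [inv_pow, ha.2, inv_one]⟩

variable {A : Subgroup G} [IsMulCommutative A]

instance (n : ℕ) : IsMulCommutative (A.nTorsion n) :=
  .of_setLike_mul_comm fun _ ha _ hb => setLike_mul_comm ha.1 hb.1

instance [A.Normal] (n : ℕ) : (A.nTorsion n).Normal :=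
  ⟨fun a ha g =>
    ⟨‹A.Normal›.conj_mem a ha.1 g, by rw [conj_pow, ha.2, mul_one, mul_inv_cancel]⟩⟩

theorem pow_eq_one_of_nTorsion {n : ℕ} (a : A.nTorsion n) : a ^ n = 1 :=
  Subtype.ext a.2.2

theorem nTorsion_ne_bot [Finite A] {p : ℕ} [Fact p.Prime] (hdvd : p ∣ Nat.card A) :
    A.nTorsion p ≠ ⊥ := by
  obtain ⟨a, ha⟩ := exists_prime_orderOf_dvd_card' p hdvd
  refine ne_bot_iff_exists_ne_one.mpr ⟨⟨a, a.2, ?_⟩, fun h => ?_⟩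
  · rw [← A.coe_pow, ← ha, pow_orderOf_eq_one, A.coe_one]
  · have : a = 1 := Subtype.ext (by simpa using congrArg Subtype.val h)
    rw [this, orderOf_one] at ha
    exact (Fact.out : p.Prime).ne_one ha.symm

end Subgroup

namespace MulAction

variable {G X : Type*} [Group G] [MulAction G X]

theorem IsPreprimitive.isPretransitive_of_normal_of_ne_bot [IsPreprimitive G X]
    [FaithfulSMul G X] {N : Subgroup G} [N.Normal] (hN : N ≠ ⊥) : IsPretransitive N X := by
  refine IsQuasiPreprimitive.isPretransitive_of_normal fun hfix => hN ?_
  refine (Subgroup.eq_bot_iff_forall N).mpr fun n hn =>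
    eq_of_smul_eq_smul (α := X) fun x => ?_
  have hx : x ∈ fixedPoints N X := hfix ▸ Set.mem_univ x
  rw [one_smul]
  exact hx ⟨n, hn⟩

theorem isCancelSMul_of_isMulCommutative [IsMulCommutative G] [FaithfulSMul G X]
    [IsPretransitive G X] : IsCancelSMul G X := by
  refine isCancelSMul_iff_eq_one_of_smul_eq.mpr fun g x hgx =>
    eq_of_smul_eq_smul (α := X) fun y => ?_
  obtain ⟨h, rfl⟩ := exists_smul_eq G x y
  rw [smul_smul, mul_comm' g h, mul_smul, hgx, one_smul]

section Regular

variable [IsCancelSMul G X] [IsPretransitive G X]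

noncomputable def regularEquiv (x₀ : X) : G ≃ X :=
  Equiv.ofBijective (· • x₀)
    ⟨fun a b h => IsCancelSMul.right_cancel a b x₀ h, surjective_smul G x₀⟩

@[simp]
theorem regularEquiv_apply (x₀ : X) (a : G) : regularEquiv x₀ a = a • x₀ := rfl

end Regular

theorem regularEquiv_symm_smul {N : Subgroup G} [N.Normal] [IsCancelSMul N X]
    [IsPretransitive N X] (x₀ : X) (g : G) (x : X) :
    (regularEquiv x₀).symm (g • x) =
      MulAut.conjNormal g ((regularEquiv x₀).symm x) *
        (regularEquiv (G := N) x₀).symm (g • x₀) := by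
  rw [Equiv.symm_apply_eq, regularEquiv_apply, mul_smul, ← regularEquiv_apply (G := N) x₀,
    Equiv.apply_symm_apply, Subgroup.smul_def, MulAut.conjNormal_apply, mul_smul, mul_smul,
    inv_smul_smul, ← Subgroup.smul_def, ← regularEquiv_apply x₀, Equiv.apply_symm_apply]

end MulAction

theorem nonempty_linearEquiv_fin_fun_of_natCard_eq {p k : ℕ} (hp : p.Prime) {V : Type*}
    [AddCommGroup V] [Module (ZMod p) V] (hcard : Nat.card V = p ^ k) :
    Nonempty (V ≃ₗ[ZMod p] (Fin k → ZMod p)) := by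
  have : Fact p.Prime := ⟨hp⟩
  have : Finite V := Nat.finite_of_card_ne_zero (hcard ▸ (pow_pos hp.pos k).ne')
  have : Module.Finite (ZMod p) V := Module.Finite.of_finite
  refine ⟨LinearEquiv.ofFinrankEq _ _ ?_⟩
  rw [Module.finrank_fin_fun]
  rw [Module.natCard_eq_pow_finrank (K := ZMod p), Nat.card_zmod] at hcard
  exact Nat.pow_right_injective hp.two_le hcard

theorem exists_equiv_fin_fun_affine_of_regular_normal {G X : Type*} [Group G] [MulAction G X]
    (N : Subgroup G) [N.Normal] [IsMulCommutative N] [IsCancelSMul N X] [IsPretransitive N X]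
    {p k : ℕ} (hp : p.Prime) (hexp : ∀ a : N, a ^ p = 1) (hcard : Nat.card X = p ^ k) :
    ∃ e : X ≃ (Fin k → ZMod p), ∀ g : G,
      ∃ (L : (Fin k → ZMod p) ≃ₗ[ZMod p] (Fin k → ZMod p)) (b : Fin k → ZMod p),
        ∀ x : X, e (g • x) = L (e x) + b := by
  obtain ⟨⟨x₀⟩, -⟩ := Nat.card_pos_iff.mp (hcard ▸ pow_pos hp.pos k)
  let : Module (ZMod p) (Additive N) := AddCommGroup.zmodModule fun a => hexp a.toMul
  let c : X ≃ Additive N := (regularEquiv x₀).symm.trans Additive.ofMul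
  obtain ⟨ε⟩ :=
    nonempty_linearEquiv_fin_fun_of_natCard_eq hp ((Nat.card_congr c).symm.trans hcard)
  refine ⟨c.trans ε.toEquiv, fun g => ⟨ε.symm ≪≫ₗ
    (MulAut.conjNormal g).toAdditive.toLinearEquiv (ZMod.map_smul _) ≪≫ₗ ε,
    ε.toEquiv (c (g • x₀)), fun x => ?_⟩⟩
  simp only [c, Equiv.trans_apply, regularEquiv_symm_smul x₀ g x, ofMul_mul,
    LinearEquiv.coe_toEquiv, LinearEquiv.trans_apply, LinearEquiv.symm_apply_apply]
  exact ε.map_add _ _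

/-- If `G` is a solvable subgroup of the symmetric group of a finite set `Ω` with at least
two elements, acting primitively on `Ω`, and `|Ω| = p ^ k` with `p` prime and `k ≥ 1`, then
there is a bijection `e : Ω ≃ (ZMod p)^k` through which every `g ∈ G` acts as an affinity
`v ↦ L v + b` with `L` an invertible linear map. -/
theorem solvable_primitive_acts_affinely {Ω : Type*} [Fintype Ω]
    (h2 : 2 ≤ Fintype.card Ω)
    (G : Subgroup (Equiv.Perm Ω)) (hsolv : IsSolvable G)
    (hprim : IsPreprimitiveAction G Ω)
    (p k : ℕ) (hp : p.Prime) (hk : 1 ≤ k) (hcard : Fintype.card Ω = p ^ k) :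
    ∃ e : Ω ≃ (Fin k → ZMod p), ∀ g : G,
      ∃ (L : (Fin k → ZMod p) ≃ₗ[ZMod p] (Fin k → ZMod p)) (b : Fin k → ZMod p),
        ∀ x : Ω, e ((g : Equiv.Perm Ω) x) = L (e x) + b := by
  have : Fact p.Prime := ⟨hp⟩
  have := hprim.isPreprimitive
  have : Group.IsSolvable G := hsolv
  obtain ⟨x₀, y, hxy⟩ := Fintype.exists_pair_of_one_lt_card h2
  rw [← Nat.card_eq_fintype_card] at hcard
  obtain ⟨g, hg⟩ := exists_smul_eq G x₀ y
  have : Nontrivial G := nontrivial_of_ne g 1 fun h => hxy (by rw [← hg, h, one_smul])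
  obtain ⟨A, hAnormal, hAcomm, hA⟩ := IsSolvable.exists_normal_isMulCommutative_ne_bot G
  have := IsPreprimitive.isPretransitive_of_normal_of_ne_bot (X := Ω) hA
  have := isCancelSMul_of_isMulCommutative (G := A) (X := Ω)
  have hpA : p ∣ Nat.card A := by
    rw [Nat.card_congr (regularEquiv x₀), hcard]
    exact dvd_pow_self p (by omega)
  have := IsPreprimitive.isPretransitive_of_normal_of_ne_bot (X := Ω) (A.nTorsion_ne_bot hpA)
  have := isCancelSMul_of_isMulCommutative (G := A.nTorsion p) (X := Ω)
  exact exists_equiv_fin_fun_affine_of_regular_normal (A.nTorsion p) hp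
    Subgroup.pow_eq_one_of_nTorsion hcard
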